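/- arXiv:2211.12840 — 6 statements merged into one kernel-verified Lean document; each statement's English description precedes it below -/
import Mathlib

section
/- There is no differentiable bijection f : ℝ → ℝ such that f'(x) = exp(f⁻¹(x)) for all x ∈ ℝ, where f⁻¹ denotes the compositional inverse of f. -/
/-- There is no differentiable bijection `f : ℝ → ℝ` with compositional inverse `g`
such that `f' x = exp (g x)` for all `x`. -/
theorem stmt_0 :
    ¬ ∃ (f g : ℝ → ℝ), Differentiable ℝ f ∧ Function.Bijective f ∧
      (∀ x, f (g x) = x) ∧ (∀ x, g (f x) = x) ∧
      (∀ x, deriv f x = Real.exp (g x)) := by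
  rintro ⟨f, g, hdiff, hbij, hfg, hgf, hderiv⟩
  -- f has derivative exp (g x) at each x
  have hfd : ∀ x, HasDerivAt f (Real.exp (g x)) x := fun x =>
    (hderiv x) ▸ (hdiff x).hasDerivAt
  -- f is strictly monotone
  have hmono : StrictMono f := strictMono_of_deriv_pos fun x => by
    rw [hderiv x]; exact Real.exp_pos _
  -- g is monotone
  have hgmono : Monotone g := fun a b hab =>
    hmono.le_iff_le.mp (by rw [hfg, hfg]; exact hab)
  set m : ℝ := f (f 0) - f 0 with hm_def
  -- the function h x = f x - x
  have hhd : ∀ x, HasDerivAt (fun y => f y - y) (Real.exp (g x) - 1) x := fun x =>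
    (hfd x).sub (hasDerivAt_id x)
  have hhderiv : ∀ x, deriv (fun y => f y - y) x = Real.exp (g x) - 1 := fun x =>
    (hhd x).deriv
  have hhdiff : Differentiable ℝ fun y => f y - y := fun x => (hhd x).differentiableAt
  -- key lemma : f x - x ≥ m for all x
  have hkey : ∀ x, x + m ≤ f x := by
    intro x
    have hg0 : g (f 0) = 0 := hgf 0
    rcases le_total x (f 0) with hx | hx
    · -- antitone on Iic (f 0)
      have hanti : AntitoneOn (fun y => f y - y) (Set.Iic (f 0)) := by
        apply antitoneOn_of_deriv_nonpos (convex_Iic _)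
          hhdiff.continuous.continuousOn hhdiff.differentiableOn
        intro y hy
        rw [hhderiv]
        have : g y ≤ 0 := by
          rw [interior_Iic] at hy
          calc g y ≤ g (f 0) := hgmono hy.le
            _ = 0 := hg0
        simpa using Real.exp_le_one_iff.mpr this
      have := hanti (Set.mem_Iic.mpr hx) (Set.mem_Iic.mpr le_rfl) hx
      simp only [hm_def] at this ⊢
      linarith
    · -- monotone on Ici (f 0)
      have hmonoOn : MonotoneOn (fun y => f y - y) (Set.Ici (f 0)) := by
        apply monotoneOn_of_deriv_nonneg (convex_Ici _)
          hhdiff.continuous.continuousOn hhdiff.differentiableOn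
        intro y hy
        rw [hhderiv]
        have : (0:ℝ) ≤ g y := by
          rw [interior_Ici] at hy
          calc (0:ℝ) = g (f 0) := hg0.symm
            _ ≤ g y := hgmono hy.le
        simpa using Real.one_le_exp this
      have := hmonoOn (Set.mem_Ici.mpr le_rfl) (Set.mem_Ici.mpr hx) hx
      simp only [hm_def] at this ⊢
      linarith
  -- hence g x ≤ x - m
  have hgle : ∀ x, g x ≤ x - m := by
    intro x
    have := hkey (g x)
    rw [hfg] at this
    linarith
  -- the auxiliary function φ x = exp(-m) * exp x - f x is monotone
  have hφd : ∀ x, HasDerivAt (fun y => Real.exp (-m) * Real.exp y - f y)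
      (Real.exp (-m) * Real.exp x - Real.exp (g x)) x := fun x =>
    ((Real.hasDerivAt_exp x).const_mul _).sub (hfd x)
  have hφmono : Monotone fun y => Real.exp (-m) * Real.exp y - f y := by
    apply monotone_of_deriv_nonneg (fun x => (hφd x).differentiableAt)
    intro x
    rw [(hφd x).deriv]
    have : Real.exp (g x) ≤ Real.exp (-m) * Real.exp x := by
      rw [← Real.exp_add]
      exact Real.exp_le_exp.mpr (by linarith [hgle x])
    linarith
  -- hence f is bounded below, contradicting surjectivity
  have hbound : ∀ x, f 0 - Real.exp (-m) ≤ f x := by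
    intro x
    rcases le_total x 0 with hx | hx
    · have := hφmono hx
      simp only at this
      have hex : (0:ℝ) < Real.exp (-m) * Real.exp x :=
        mul_pos (Real.exp_pos _) (Real.exp_pos _)
      simp only [Real.exp_zero, mul_one] at this
      linarith
    · have := hmono.monotone hx
      have : f 0 ≤ f x := hmono.monotone hx
      have := Real.exp_pos (-m)
      linarith
  obtain ⟨x, hx⟩ := hbij.2 (f 0 - Real.exp (-m) - 1)
  have := hbound x
  rw [hx] at this
  linarith
end

section
/- There exists a unique formal power series f ∈ ℝ⟦X⟧ with f(0) = 0 and first coefficient 1 satisfying the formal identity f'' · (f' ∘ f⁻¹) = f', where f⁻¹ is the compositional inverse power series of f. Its first coefficients are f = X + X²/2 + 0·X³ + X⁴/24 - X⁵/20 + ⋯. -/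
/-!
Differentiating `f ∘ g = X` gives `(f' ∘ g) * g' = 1`, so the equation says `f'' = f' * g'`.
Written for the inverse `g` alone it becomes `g'' = -g'² * (g' ∘ g)` with `g(0) = 0`,
`g'(0) = 1`. The `n`-th coefficient of the right-hand side only involves the coefficients of `g`
of index at most `n + 1`, so solving for the coefficients of `g''` is a contraction for the
`X`-adic metric, and this equation has exactly one solution; `f` is its compositional inverse.
The first coefficients follow by comparing coefficients in `f ∘ g = X` and `f'' = f' * g'`.
-/

open PowerSeries

/-- Composition `f ∘ g` of formal power series (intended for `g` with zero constant term):
the `n`-th coefficient only depends on the first `n + 1` terms of `f`. -/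
noncomputable def PowerSeries.compose (f g : PowerSeries ℝ) : PowerSeries ℝ :=
  PowerSeries.mk fun n =>
    PowerSeries.coeff n (∑ k ∈ Finset.range (n + 1), PowerSeries.C (PowerSeries.coeff k f) * g ^ k)

namespace PowerSeries

open Finset

theorem coeff_compose (f g : ℝ⟦X⟧) (n : ℕ) :
    coeff n (f.compose g) = ∑ k ∈ range (n + 1), coeff k f * coeff n (g ^ k) := by
  simp only [compose, coeff_mk, map_sum, coeff_C_mul]

section CommRing

variable {R : Type*} [CommRing R]

theorem X_pow_dvd_pow_sub_pow {n : ℕ} {g₁ g₂ : R⟦X⟧} (h : X ^ n ∣ g₁ - g₂) (k : ℕ) :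
    X ^ n ∣ g₁ ^ k - g₂ ^ k :=
  h.trans (sub_dvd_pow_sub_pow g₁ g₂ k)

theorem coeff_eq_of_X_pow_dvd_sub {n m : ℕ} {f₁ f₂ : R⟦X⟧} (h : X ^ n ∣ f₁ - f₂) (hm : m < n) :
    coeff m f₁ = coeff m f₂ := by
  rw [← sub_eq_zero, ← map_sub]
  exact X_pow_dvd_iff.mp h m hm

theorem eq_of_forall_X_pow_dvd_sub {f₁ f₂ : R⟦X⟧} (h : ∀ n, X ^ n ∣ f₁ - f₂) : f₁ = f₂ := by
  ext n
  exact coeff_eq_of_X_pow_dvd_sub (h (n + 1)) n.lt_succ_self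

theorem coeff_pow_eq_zero_of_lt {g : R⟦X⟧} (hg : constantCoeff g = 0) {n k : ℕ} (h : n < k) :
    coeff n (g ^ k) = 0 :=
  X_pow_dvd_iff.mp (pow_dvd_pow_of_dvd (X_dvd_iff.mpr hg) k) n h

theorem X_pow_dvd_derivative_sub {n : ℕ} {f₁ f₂ : R⟦X⟧} (h : X ^ (n + 1) ∣ f₁ - f₂) :
    X ^ n ∣ d⁄dX R f₁ - d⁄dX R f₂ := by
  refine X_pow_dvd_iff.mpr fun m hm => ?_
  rw [← map_sub, coeff_derivative, X_pow_dvd_iff.mp h (m + 1) (by omega), zero_mul]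

end CommRing

theorem constantCoeff_derivative {R : Type*} [CommSemiring R] (f : R⟦X⟧) :
    constantCoeff (d⁄dX R f) = coeff 1 f := by
  rw [← coeff_zero_eq_constantCoeff_apply, coeff_derivative]
  simp

theorem coeff_derivative_derivative {R : Type*} [CommSemiring R] (f : R⟦X⟧) (n : ℕ) :
    coeff n (d⁄dX R (d⁄dX R f)) = coeff (n + 2) f * ((n + 1) * (n + 2)) := by
  rw [coeff_derivative, coeff_derivative, mul_assoc]
  push_cast
  ring_nf

theorem X_pow_dvd_compose_sub_compose {n : ℕ} {f₁ f₂ g₁ g₂ : ℝ⟦X⟧}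
    (hf : X ^ n ∣ f₁ - f₂) (hg : X ^ n ∣ g₁ - g₂) :
    X ^ n ∣ f₁.compose g₁ - f₂.compose g₂ := by
  refine X_pow_dvd_iff.mpr fun m hm => ?_
  rw [map_sub, sub_eq_zero, coeff_compose, coeff_compose]
  refine sum_congr rfl fun k hk => ?_
  rw [coeff_eq_of_X_pow_dvd_sub hf (by grind),
    coeff_eq_of_X_pow_dvd_sub (X_pow_dvd_pow_sub_pow hg k) hm]

theorem compose_eq_subst (f : ℝ⟦X⟧) {g : ℝ⟦X⟧} (hg : constantCoeff g = 0) :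
    f.compose g = f.subst g := by
  ext n
  rw [coeff_compose, coeff_subst' (HasSubst.of_constantCoeff_zero' hg)]
  refine (finsum_eq_sum_of_support_subset _ fun k hk => ?_).symm
  simp only [Function.mem_support, coe_range, Set.mem_Iio] at hk ⊢
  by_contra! hkn
  exact hk (by rw [coeff_pow_eq_zero_of_lt hg (by omega), mul_zero])

theorem constantCoeff_compose (f g : ℝ⟦X⟧) :
    constantCoeff (f.compose g) = constantCoeff f := by
  simpa using coeff_compose f g 0

theorem compose_X (f : ℝ⟦X⟧) : f.compose X = f := by
  rw [compose_eq_subst f constantCoeff_X, X_subst]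

theorem X_compose {g : ℝ⟦X⟧} (hg : constantCoeff g = 0) : X.compose g = g := by
  rw [compose_eq_subst X hg, subst_X (HasSubst.of_constantCoeff_zero' hg)]

theorem mul_compose (f₁ f₂ : ℝ⟦X⟧) {g : ℝ⟦X⟧} (hg : constantCoeff g = 0) :
    (f₁ * f₂).compose g = f₁.compose g * f₂.compose g := by
  simp only [compose_eq_subst _ hg, subst_mul (HasSubst.of_constantCoeff_zero' hg)]

theorem neg_compose (f g : ℝ⟦X⟧) : (-f).compose g = -f.compose g := by
  ext n
  simp [coeff_compose]

theorem pow_compose (f : ℝ⟦X⟧) {g : ℝ⟦X⟧} (hg : constantCoeff g = 0) (k : ℕ) :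
    (f ^ k).compose g = f.compose g ^ k := by
  simp only [compose_eq_subst _ hg, subst_pow (HasSubst.of_constantCoeff_zero' hg)]

theorem compose_compose (f : ℝ⟦X⟧) {g h : ℝ⟦X⟧} (hg : constantCoeff g = 0)
    (hh : constantCoeff h = 0) : (f.compose g).compose h = f.compose (g.compose h) := by
  have hgh : constantCoeff (g.compose h) = 0 := by rw [constantCoeff_compose, hg]
  rw [compose_eq_subst _ hgh, compose_eq_subst _ hg, compose_eq_subst _ hh, compose_eq_subst _ hh,
    subst_comp_subst_apply (HasSubst.of_constantCoeff_zero' hg)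
      (HasSubst.of_constantCoeff_zero' hh)]

theorem derivative_compose (f : ℝ⟦X⟧) {g : ℝ⟦X⟧} (hg : constantCoeff g = 0) :
    d⁄dX ℝ (f.compose g) = (d⁄dX ℝ f).compose g * d⁄dX ℝ g := by
  simp only [compose_eq_subst _ hg, derivative_subst (HasSubst.of_constantCoeff_zero' hg)]

theorem exists_compose_inverse {g : ℝ⟦X⟧} (hg₀ : constantCoeff g = 0)
    (hg₁ : IsUnit (coeff 1 g)) :
    ∃ f, constantCoeff f = 0 ∧ g.compose f = X ∧ f.compose g = X := by
  refine ⟨g.substInvOfIsUnit hg₁, constantCoeff_substInvOfIsUnit g hg₁, ?_, ?_⟩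
  · rw [compose_eq_subst _ (constantCoeff_substInvOfIsUnit g hg₁),
      subst_substInvOfIsUnit_right g hg₀ hg₁]
  · rw [compose_eq_subst _ hg₀, subst_substInvOfIsUnit_left g hg₀ hg₁]

theorem eq_of_compose_eq_X {f₁ f₂ g : ℝ⟦X⟧} (hf₁ : constantCoeff f₁ = 0)
    (hg : constantCoeff g = 0) (h₁ : g.compose f₁ = X) (h₂ : f₂.compose g = X) : f₁ = f₂ :=
  calc f₁ = (f₂.compose g).compose f₁ := by rw [h₂, X_compose hf₁]
    _ = f₂ := by rw [compose_compose _ hg hf₁, h₁, compose_X]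

section Contraction

variable {R : Type*} [CommRing R]

def IsXAdicContraction (T : R⟦X⟧ → R⟦X⟧) : Prop :=
  ∀ n f₁ f₂, X ^ n ∣ f₁ - f₂ → X ^ (n + 1) ∣ T f₁ - T f₂

namespace IsXAdicContraction

variable {T : R⟦X⟧ → R⟦X⟧} (hT : IsXAdicContraction T)
include hT

theorem eq_of_isFixedPt {f₁ f₂ : R⟦X⟧} (h₁ : Function.IsFixedPt T f₁)
    (h₂ : Function.IsFixedPt T f₂) : f₁ = f₂ := by
  refine eq_of_forall_X_pow_dvd_sub fun n => ?_
  induction n with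
  | zero => simp
  | succ n ih => simpa only [h₁.eq, h₂.eq] using hT n f₁ f₂ ih

theorem exists_isFixedPt : ∃ f, Function.IsFixedPt T f := by
  set a : ℕ → R⟦X⟧ := fun k => T^[k] 0
  have step (k : ℕ) : X ^ k ∣ a (k + 1) - a k := by
    induction k with
    | zero => simp
    | succ k ih =>
      simpa only [a, Function.iterate_succ_apply'] using hT k _ _ ih
  have stable (k j : ℕ) : X ^ k ∣ a (k + j) - a k := by
    induction j with
    | zero => simp
    | succ j ih =>
      rw [← sub_add_sub_cancel _ (a (k + j))]
      exact dvd_add ((pow_dvd_pow X (k.le_add_right j)).trans (step (k + j))) ih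
  set f := mk fun n => coeff n (a (n + 1))
  have approx (k : ℕ) : X ^ k ∣ f - a k := by
    refine X_pow_dvd_iff.mpr fun m hm => ?_
    rw [map_sub, sub_eq_zero, coeff_mk]
    obtain ⟨j, rfl⟩ := Nat.exists_eq_add_of_lt hm
    rw [add_right_comm]
    exact (coeff_eq_of_X_pow_dvd_sub (stable (m + 1) j) m.lt_succ_self).symm
  refine ⟨f, eq_of_forall_X_pow_dvd_sub fun n => ?_⟩
  cases n with
  | zero => simp
  | succ n =>
    rw [← sub_add_sub_cancel _ (a (n + 1))]
    refine dvd_add ?_ (dvd_sub_comm.mp (approx (n + 1)))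
    simpa only [a, Function.iterate_succ_apply'] using hT n _ _ (approx n)

theorem existsUnique_isFixedPt : ∃! f, Function.IsFixedPt T f :=
  let ⟨f, hf⟩ := hT.exists_isFixedPt
  ⟨f, hf, fun _ h => hT.eq_of_isFixedPt h hf⟩

end IsXAdicContraction

end Contraction

section SecondOrder

variable {K : Type*} [Field K]

noncomputable def secondOrderStep (a b : K) (N : K⟦X⟧ → K⟦X⟧) (g : K⟦X⟧) : K⟦X⟧ :=
  mk fun
    | 0 => a
    | 1 => b
    | n + 2 => coeff n (N g) / ((n + 1) * (n + 2))

section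

variable {a b : K} {N : K⟦X⟧ → K⟦X⟧} {g : K⟦X⟧}

@[simp] theorem coeff_zero_secondOrderStep : coeff 0 (secondOrderStep a b N g) = a := by
  rw [secondOrderStep, coeff_mk]

@[simp] theorem coeff_one_secondOrderStep : coeff 1 (secondOrderStep a b N g) = b := by
  rw [secondOrderStep, coeff_mk]

@[simp] theorem coeff_add_two_secondOrderStep (n : ℕ) :
    coeff (n + 2) (secondOrderStep a b N g) = coeff n (N g) / ((n + 1) * (n + 2)) := by
  rw [secondOrderStep, coeff_mk]

theorem isFixedPt_secondOrderStep_iff [CharZero K] :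
    Function.IsFixedPt (secondOrderStep a b N) g ↔
      constantCoeff g = a ∧ coeff 1 g = b ∧ d⁄dX K (d⁄dX K g) = N g := by
  have hn (n : ℕ) : ((n : K) + 1) * (n + 2) ≠ 0 := by norm_cast
  rw [Function.IsFixedPt, PowerSeries.ext_iff, ← coeff_zero_eq_constantCoeff_apply,
    PowerSeries.ext_iff]
  constructor
  · intro h
    refine ⟨by simpa using (h 0).symm, by simpa using (h 1).symm, fun n => ?_⟩
    rw [coeff_derivative_derivative, ← h (n + 2), coeff_add_two_secondOrderStep,
      div_mul_cancel₀ _ (hn n)]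
  · rintro ⟨hg₀, hg₁, hg₂⟩ (_ | _ | n)
    · simpa using hg₀.symm
    · simpa using hg₁.symm
    · rw [coeff_add_two_secondOrderStep, ← hg₂, coeff_derivative_derivative,
        mul_div_cancel_right₀ _ (hn n)]

end

theorem isXAdicContraction_secondOrderStep (a b : K) {N : K⟦X⟧ → K⟦X⟧}
    (hN : ∀ n g₁ g₂, X ^ (n + 1) ∣ g₁ - g₂ → X ^ n ∣ N g₁ - N g₂) :
    IsXAdicContraction (secondOrderStep a b N) := by
  intro n g₁ g₂ h
  refine X_pow_dvd_iff.mpr fun m hm => ?_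
  rw [map_sub, sub_eq_zero]
  match m with
  | 0 | 1 => simp
  | m + 2 =>
    obtain ⟨k, rfl⟩ : ∃ k, n = k + 1 := ⟨n - 1, by omega⟩
    rw [coeff_add_two_secondOrderStep, coeff_add_two_secondOrderStep,
      coeff_eq_of_X_pow_dvd_sub (hN k g₁ g₂ h) (by omega)]

theorem existsUnique_derivative_derivative_eq [CharZero K] (a b : K) {N : K⟦X⟧ → K⟦X⟧}
    (hN : ∀ n g₁ g₂, X ^ (n + 1) ∣ g₁ - g₂ → X ^ n ∣ N g₁ - N g₂) :
    ∃! g : K⟦X⟧, constantCoeff g = a ∧ coeff 1 g = b ∧ d⁄dX K (d⁄dX K g) = N g :=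
  (existsUnique_congr fun _ => isFixedPt_secondOrderStep_iff).mp
      (isXAdicContraction_secondOrderStep a b hN).existsUnique_isFixedPt

end SecondOrder

theorem derivative_compose_mul_derivative {f g : ℝ⟦X⟧} (hg : constantCoeff g = 0)
    (hfg : f.compose g = X) : (d⁄dX ℝ f).compose g * d⁄dX ℝ g = 1 := by
  rw [← derivative_compose f hg, hfg, derivative_X]

theorem derivative_derivative_eq_mul {f g : ℝ⟦X⟧} (hg : constantCoeff g = 0)
    (hfg : f.compose g = X) (h : d⁄dX ℝ (d⁄dX ℝ f) * (d⁄dX ℝ f).compose g = d⁄dX ℝ f) :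
    d⁄dX ℝ (d⁄dX ℝ f) = d⁄dX ℝ f * d⁄dX ℝ g := by
  linear_combination d⁄dX ℝ g * h - d⁄dX ℝ (d⁄dX ℝ f) * derivative_compose_mul_derivative hg hfg

theorem derivative_derivative_of_inverse {f g : ℝ⟦X⟧} (hg : constantCoeff g = 0)
    (hfg : f.compose g = X) (h : d⁄dX ℝ (d⁄dX ℝ f) * (d⁄dX ℝ f).compose g = d⁄dX ℝ f) :
    d⁄dX ℝ (d⁄dX ℝ g) = -(d⁄dX ℝ g ^ 2 * (d⁄dX ℝ g).compose g) := by
  have hinv := derivative_compose_mul_derivative hg hfg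
  have hcomp : (d⁄dX ℝ (d⁄dX ℝ f)).compose g = (d⁄dX ℝ f).compose g * (d⁄dX ℝ g).compose g := by
    rw [derivative_derivative_eq_mul hg hfg h, mul_compose _ _ hg]
  have hdiff := congrArg (d⁄dX ℝ) hinv
  rw [Derivation.leibniz, derivative_compose _ hg, Derivation.map_one_eq_zero, smul_eq_mul,
    smul_eq_mul] at hdiff
  -- `hdiff` and `hcomp` say `(f' ∘ g) * (g'' + g'² * (g' ∘ g)) = 0`, and `f' ∘ g` is a unit.
  linear_combination (-(d⁄dX ℝ (d⁄dX ℝ g)) - (d⁄dX ℝ g) ^ 2 * (d⁄dX ℝ g).compose g) * hinv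
    + d⁄dX ℝ g * hdiff - (d⁄dX ℝ g) ^ 3 * hcomp

theorem derivative_derivative_mul_compose_of_inverse {f g : ℝ⟦X⟧} (hf : constantCoeff f = 0)
    (hg : constantCoeff g = 0) (hfg : f.compose g = X) (hgf : g.compose f = X)
    (h : d⁄dX ℝ (d⁄dX ℝ g) = -(d⁄dX ℝ g ^ 2 * (d⁄dX ℝ g).compose g)) :
    d⁄dX ℝ (d⁄dX ℝ f) * (d⁄dX ℝ f).compose g = d⁄dX ℝ f := by
  have hinv := derivative_compose_mul_derivative hg hfg
  have hinv' := derivative_compose_mul_derivative hf hgf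
  have hcomp : (d⁄dX ℝ (d⁄dX ℝ g)).compose f = -((d⁄dX ℝ g).compose f ^ 2 * d⁄dX ℝ g) := by
    rw [h, neg_compose, mul_compose _ _ hf, pow_compose _ hf, compose_compose _ hg hf, hgf,
      compose_X]
  have hdiff := congrArg (d⁄dX ℝ) hinv'
  rw [Derivation.leibniz, derivative_compose _ hf, Derivation.map_one_eq_zero, smul_eq_mul,
    smul_eq_mul] at hdiff
  -- `hdiff` and `hcomp` say `(g' ∘ f) * (f'' - g' * f') = 0`, where `g' ∘ f` is a unit;
  -- then `f'' * (f' ∘ g) = f' * (g' * (f' ∘ g)) = f'`.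
  linear_combination ((d⁄dX ℝ f).compose g * (-(d⁄dX ℝ (d⁄dX ℝ f)) + d⁄dX ℝ g * d⁄dX ℝ f *
      ((d⁄dX ℝ g).compose f * d⁄dX ℝ f + 1))) * hinv'
    + ((d⁄dX ℝ f).compose g * d⁄dX ℝ f) * hdiff
    - ((d⁄dX ℝ f).compose g * d⁄dX ℝ f ^ 3) * hcomp + d⁄dX ℝ f * hinv

theorem coeff_one_mul_coeff_one_of_compose_eq_X {f g : ℝ⟦X⟧} (hg : constantCoeff g = 0)
    (hfg : f.compose g = X) : coeff 1 f * coeff 1 g = 1 := by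
  have h := congrArg constantCoeff (derivative_compose_mul_derivative hg hfg)
  rwa [map_mul, constantCoeff_compose, constantCoeff_derivative, constantCoeff_derivative,
    map_one] at h

theorem existsUnique_inverse_ode :
    ∃! g : ℝ⟦X⟧, constantCoeff g = 0 ∧ coeff 1 g = 1 ∧
      d⁄dX ℝ (d⁄dX ℝ g) = -(d⁄dX ℝ g ^ 2 * (d⁄dX ℝ g).compose g) := by
  refine existsUnique_derivative_derivative_eq 0 1 fun n g₁ g₂ h => ?_
  have hd := X_pow_dvd_derivative_sub h
  rw [neg_sub_neg]
  exact dvd_sub_comm.mp (dvd_mul_sub_mul (X_pow_dvd_pow_sub_pow hd 2)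
    (X_pow_dvd_compose_sub_compose hd ((pow_dvd_pow X n.le_succ).trans h)))

theorem coeff_two_to_five_of_derivative_derivative_eq_mul {f g : ℝ⟦X⟧}
    (hf₀ : constantCoeff f = 0) (hf₁ : coeff 1 f = 1) (hg₀ : constantCoeff g = 0)
    (hfg : f.compose g = X) (h : d⁄dX ℝ (d⁄dX ℝ f) = d⁄dX ℝ f * d⁄dX ℝ g) :
    coeff 2 f = 1 / 2 ∧ coeff 3 f = 0 ∧ coeff 4 f = 1 / 24 ∧ coeff 5 f = -(1 / 20) := by
  rw [← coeff_zero_eq_constantCoeff_apply] at hf₀ hg₀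
  have inv₁ := congrArg (coeff 1) hfg
  have inv₂ := congrArg (coeff 2) hfg
  have inv₃ := congrArg (coeff 3) hfg
  have inv₄ := congrArg (coeff 4) hfg
  have ode₀ := congrArg (coeff 0) h
  have ode₁ := congrArg (coeff 1) h
  have ode₂ := congrArg (coeff 2) h
  have ode₃ := congrArg (coeff 3) h
  simp only [coeff_compose, sum_range_succ, range_one, sum_singleton, pow_zero, pow_succ,
    one_mul, mul_one, zero_mul, mul_zero, zero_add, add_zero, coeff_one, coeff_X, coeff_mul,
    Nat.sum_antidiagonal_succ, HasAntidiagonal.antidiagonal_zero, coeff_derivative, hf₀, hf₁, hg₀,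
    Nat.reduceAdd, one_ne_zero, OfNat.ofNat_ne_zero, OfNat.ofNat_ne_one, ↓reduceIte, Nat.cast_add,
    Nat.cast_one, Nat.cast_ofNat, CharP.cast_eq_zero]
    at inv₁ inv₂ inv₃ inv₄ ode₀ ode₁ ode₂ ode₃
  have ha₂ : coeff 2 f = 1 / 2 := by linarith
  have hb₂ : coeff 2 g = -(1 / 2) := by rw [inv₁, ha₂] at inv₂; linarith
  have ha₃ : coeff 3 f = 0 := by rw [inv₁, ha₂, hb₂] at ode₁; linarith
  have hb₃ : coeff 3 g = 1 / 2 := by rw [inv₁, ha₂, hb₂, ha₃] at inv₃; linarith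
  have ha₄ : coeff 4 f = 1 / 24 := by rw [inv₁, ha₂, hb₂, ha₃, hb₃] at ode₂; linarith
  have hb₄ : coeff 4 g = -(2 / 3) := by rw [inv₁, ha₂, hb₂, ha₃, hb₃, ha₄] at inv₄; linarith
  have ha₅ : coeff 5 f = -(1 / 20) := by
    rw [inv₁, ha₂, hb₂, ha₃, hb₃, ha₄, hb₄] at ode₃; linarith
  exact ⟨ha₂, ha₃, ha₄, ha₅⟩

end PowerSeries

/-- There is a unique formal power series `f ∈ ℝ⟦X⟧` with zero constant term and first
coefficient `1` admitting a compositional inverse `g` and satisfying the formal identity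
`f'' * (f' ∘ f⁻¹) = f'`; its first coefficients are
`f = X + X²/2 + 0·X³ + X⁴/24 - X⁵/20 + ⋯`. -/
theorem stmt_3 :
    (∃! f : PowerSeries ℝ, PowerSeries.constantCoeff f = 0 ∧ PowerSeries.coeff 1 f = 1 ∧
      ∃ g : PowerSeries ℝ, PowerSeries.constantCoeff g = 0 ∧
        PowerSeries.compose f g = PowerSeries.X ∧ PowerSeries.compose g f = PowerSeries.X ∧
        f.derivativeFun.derivativeFun * PowerSeries.compose f.derivativeFun g
          = f.derivativeFun) ∧
    (∀ f : PowerSeries ℝ, (PowerSeries.constantCoeff f = 0 ∧ PowerSeries.coeff 1 f = 1 ∧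
      ∃ g : PowerSeries ℝ, PowerSeries.constantCoeff g = 0 ∧
        PowerSeries.compose f g = PowerSeries.X ∧ PowerSeries.compose g f = PowerSeries.X ∧
        f.derivativeFun.derivativeFun * PowerSeries.compose f.derivativeFun g
          = f.derivativeFun) →
      PowerSeries.coeff 2 f = 1 / 2 ∧ PowerSeries.coeff 3 f = 0 ∧
      PowerSeries.coeff 4 f = 1 / 24 ∧ PowerSeries.coeff 5 f = -(1 / 20)) := by
  obtain ⟨g, ⟨hg₀, hg₁, hg⟩, hg_unique⟩ := existsUnique_inverse_ode
  obtain ⟨f, hf₀, hgf, hfg⟩ := exists_compose_inverse hg₀ (hg₁ ▸ isUnit_one)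
  have hf₁ : coeff 1 f = 1 := by
    simpa [hg₁] using coeff_one_mul_coeff_one_of_compose_eq_X hg₀ hfg
  refine ⟨⟨f, ⟨hf₀, hf₁, g, hg₀, hfg, hgf,
    derivative_derivative_mul_compose_of_inverse hf₀ hg₀ hfg hgf hg⟩, ?_⟩, ?_⟩
  · rintro f' ⟨hf'₀, hf'₁, g', hg'₀, hfg', hgf', h⟩
    obtain rfl : g' = g := hg_unique g' ⟨hg'₀,
      by simpa [hf'₁] using coeff_one_mul_coeff_one_of_compose_eq_X hg'₀ hfg',
      derivative_derivative_of_inverse hg'₀ hfg' h⟩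
    exact eq_of_compose_eq_X hf'₀ hg'₀ hgf' hfg
  · rintro f' ⟨hf'₀, hf'₁, g', hg'₀, hfg', -, h⟩
    exact coeff_two_to_five_of_derivative_derivative_eq_mul hf'₀ hf'₁ hg'₀ hfg'
      (derivative_derivative_eq_mul hg'₀ hfg' h)
end

section
/- Let g : [0, a) → ℝ (with 0 < a ≤ ∞) be differentiable with g(0) = 0, g(x) ≥ x and 0 ≤ g(x) < a for all x ∈ [0, a), satisfying g'(t) = exp(g(g(t))) for all t. Then for every x ∈ [0, a), x = ∫₀^{g(x)} exp(-g(s)) ds, and consequently x ≤ 1 for all x ∈ [0, a); hence a ≤ 1 or g is bounded, and in particular a = +∞ is impossible. -/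
open scoped ENNReal

/-!
Since `g' = exp (g ∘ g)`, the integrand `g' t * exp (-g (g t))` is identically `1`, so the
substitution `u = g t` gives `x = ∫₀^{g x} exp (-g u) du`. As `g u ≥ u`, this is at most
`∫₀^{g x} exp (-u) du < 1`. Every `x ∈ [0, a)` is therefore at most `1`, so `a ≤ 1`.
-/

open Set Real intervalIntegral

theorem eq_integral_exp_neg_comp_of_hasDerivAt {g : ℝ → ℝ} {x : ℝ} (hx : 0 ≤ x) (hg0 : g 0 = 0)
    (hcont : ContinuousOn g (Icc 0 x))
    (hderiv : ∀ t ∈ Ioo 0 x, HasDerivAt g (exp (g (g t))) t) :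
    x = ∫ s in 0..g x, exp (-g s) := by
  have hsubst := integral_comp_mul_deriv_of_deriv_nonneg (g := fun s => exp (-g s))
    (by rwa [uIcc_of_le hx]) (by simpa [hx] using hderiv) fun t _ => (exp_pos _).le
  rw [hg0] at hsubst
  rw [← hsubst]
  simp [← exp_add]

theorem integral_exp_neg_comp_le_one_sub_exp_neg {g : ℝ → ℝ} {y : ℝ} (hy : 0 ≤ y)
    (hcont : ContinuousOn g (Icc 0 y)) (hge : ∀ s ∈ Icc 0 y, s ≤ g s) :
    ∫ s in 0..y, exp (-g s) ≤ 1 - exp (-y) := by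
  calc ∫ s in 0..y, exp (-g s)
      ≤ ∫ s in 0..y, exp (-s) := by
        refine integral_mono_on hy ?_ ?_ fun s hs => exp_le_exp.2 (neg_le_neg (hge s hs))
        · exact (hcont.neg.rexp).intervalIntegrable_of_Icc hy
        · exact (continuous_neg.rexp).intervalIntegrable _ _
    _ = 1 - exp (-y) := by simp [integral_comp_neg]

theorem le_ofReal_of_forall_ofReal_lt_imp_le {a : ℝ≥0∞} {c : ℝ}
    (h : ∀ x : ℝ, 0 ≤ x → ENNReal.ofReal x < a → x ≤ c) : a ≤ ENNReal.ofReal c := by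
  refine le_of_forall_lt_imp_le_of_dense fun q hq => ?_
  have hq_eq := ENNReal.ofReal_toReal hq.ne_top
  rw [← hq_eq] at hq ⊢
  exact ENNReal.ofReal_le_ofReal (h _ ENNReal.toReal_nonneg hq)

theorem stmt_5_general (a : ℝ≥0∞) (g : ℝ → ℝ)
    (hg0 : g 0 = 0)
    (hge : ∀ x : ℝ, 0 ≤ x → ENNReal.ofReal x < a → x ≤ g x)
    (hmaps : ∀ x : ℝ, 0 ≤ x → ENNReal.ofReal x < a → 0 ≤ g x ∧ ENNReal.ofReal (g x) < a)
    (hderiv : ∀ t : ℝ, 0 ≤ t → ENNReal.ofReal t < a →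
      HasDerivWithinAt g (Real.exp (g (g t))) (Set.Ici 0) t) :
    (∀ x : ℝ, 0 ≤ x → ENNReal.ofReal x < a →
        x = ∫ s in (0 : ℝ)..(g x), Real.exp (-(g s)) ∧ x ≤ 1) ∧
    a ≤ 1 ∧ a ≠ ⊤ := by
  have hdom {x y : ℝ} (hxa : ENNReal.ofReal x < a) (hyx : y ≤ x) : ENNReal.ofReal y < a :=
    (ENNReal.ofReal_le_ofReal hyx).trans_lt hxa
  have hcont {x : ℝ} (hxa : ENNReal.ofReal x < a) : ContinuousOn g (Icc 0 x) := fun t ht =>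
    (hderiv t ht.1 (hdom hxa ht.2)).continuousWithinAt.mono Icc_subset_Ici_self
  have hidentity : ∀ x : ℝ, 0 ≤ x → ENNReal.ofReal x < a →
      x = ∫ s in (0 : ℝ)..(g x), exp (-(g s)) ∧ x ≤ 1 := by
    intro x hx hxa
    obtain ⟨hgx, hgxa⟩ := hmaps x hx hxa
    have hx_eq : x = ∫ s in (0 : ℝ)..(g x), exp (-(g s)) :=
      eq_integral_exp_neg_comp_of_hasDerivAt hx hg0 (hcont hxa) fun t ht =>
        (hderiv t ht.1.le (hdom hxa ht.2.le)).hasDerivAt (Ici_mem_nhds ht.1)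
    refine ⟨hx_eq, ?_⟩
    have hbound := integral_exp_neg_comp_le_one_sub_exp_neg hgx (hcont hgxa)
      fun s hs => hge s hs.1 (hdom hgxa hs.2)
    linarith [exp_pos (-g x)]
  have hle : a ≤ 1 := by
    simpa using le_ofReal_of_forall_ofReal_lt_imp_le fun x hx hxa => (hidentity x hx hxa).2
  exact ⟨hidentity, hle, ne_top_of_le_ne_top ENNReal.one_ne_top hle⟩

/-- Let `g` be differentiable on `[0, a)` (with `0 < a ≤ ∞`), `g 0 = 0`, `g x ≥ x` and
`0 ≤ g x < a` on `[0, a)`, satisfying `g' t = exp (g (g t))`.  Then for every `x ∈ [0, a)`,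
`x = ∫₀^{g x} exp (-g s) ds`, hence `x ≤ 1`; consequently `a ≤ 1` and in particular
`a = +∞` is impossible. -/
theorem stmt_5 (a : ℝ≥0∞) (ha : 0 < a) (g : ℝ → ℝ)
    (hg0 : g 0 = 0)
    (hge : ∀ x : ℝ, 0 ≤ x → ENNReal.ofReal x < a → x ≤ g x)
    (hmaps : ∀ x : ℝ, 0 ≤ x → ENNReal.ofReal x < a → 0 ≤ g x ∧ ENNReal.ofReal (g x) < a)
    (hderiv : ∀ t : ℝ, 0 ≤ t → ENNReal.ofReal t < a →
      HasDerivWithinAt g (Real.exp (g (g t))) (Set.Ici 0) t) :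
    (∀ x : ℝ, 0 ≤ x → ENNReal.ofReal x < a →
        x = ∫ s in (0 : ℝ)..(g x), Real.exp (-(g s)) ∧ x ≤ 1) ∧
    a ≤ 1 ∧ a ≠ ⊤ :=
  stmt_5_general a g hg0 hge hmaps hderiv
end

section
/- Let g : [0,a) → ℝ satisfy the hypotheses g(0)=0, g(x) ≥ x, g([0,a)) ⊆ [0,a), g'(t) = 1 + g(g(t)), and additionally exp(x) ≤ 1 + g(x) for all x ∈ [0,a). Then every x ∈ [0,a) satisfies x ≤ ∫₀^{g(x)} exp(-t) dt ≤ 1; in particular a ≤ 1 cannot be avoided, so no such g exists on [0,∞). -/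
/-!
Along the solution, `F t = 1 - exp (-g t) - t` is nondecreasing: its derivative is
`exp (-g t) * (1 + g (g t)) - 1`, which is nonnegative because `exp (g t) ≤ 1 + g (g t)`
(the hypothesis `exp ≤ 1 + g` applied at the point `g t ∈ [0, a)`). Since `F 0 = 0`, this gives
`x ≤ 1 - exp (-g x) = ∫₀^{g x} exp (-t) dt < 1` on `[0, a)`, which forces `a ≤ 1`.
-/

open Real Set

theorem integral_exp_neg_eq (y : ℝ) : ∫ t in (0 : ℝ)..y, exp (-t) = 1 - exp (-y) := by
  simp [intervalIntegral.integral_comp_neg (fun t => exp t), integral_exp]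

theorem one_le_exp_neg_mul_of_exp_le {y z : ℝ} (h : exp y ≤ z) : 1 ≤ exp (-y) * z := by
  rw [exp_neg, inv_mul_eq_div, one_le_div (exp_pos y)]
  exact h

theorem monotoneOn_Ico_of_hasDerivWithinAt_Ici {f f' : ℝ → ℝ} {b c : ℝ}
    (hf : ∀ t ∈ Ico b c, HasDerivWithinAt f (f' t) (Ici b) t)
    (hf' : ∀ t ∈ Ioo b c, 0 ≤ f' t) : MonotoneOn f (Ico b c) := by
  refine monotoneOn_of_hasDerivWithinAt_nonneg (convex_Ico b c)
    (fun t ht => (hf t ht).continuousWithinAt.mono Ico_subset_Ici_self) (fun t ht => ?_)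
    (by simpa only [interior_Ico] using hf')
  rw [interior_Ico] at ht ⊢
  exact (hf t (Ioo_subset_Ico_self ht)).mono (Ioo_subset_Ico_self.trans Ico_subset_Ici_self)

theorem le_of_forall_mem_Ico_lt {a b : ℝ} (h : ∀ x ∈ Ico (0 : ℝ) a, x < b) (hb : 0 ≤ b) :
    a ≤ b := by
  refine le_of_forall_lt_imp_le_of_dense fun x hx => ?_
  rcases lt_or_ge x 0 with hx0 | hx0
  · linarith
  · exact (h x ⟨hx0, hx⟩).le

theorem stmt_9_general (a : ℝ) (g : ℝ → ℝ)
    (hg0 : g 0 = 0)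
    (hmaps : Set.MapsTo g (Set.Ico (0 : ℝ) a) (Set.Ico (0 : ℝ) a))
    (hderiv : ∀ t ∈ Set.Ico (0 : ℝ) a,
      HasDerivWithinAt g (1 + g (g t)) (Set.Ici 0) t)
    (hexp : ∀ x ∈ Set.Ico (0 : ℝ) a, Real.exp x ≤ 1 + g x) :
    (∀ x ∈ Set.Ico (0 : ℝ) a,
      x ≤ (∫ t in (0 : ℝ)..(g x), Real.exp (-t)) ∧
      (∫ t in (0 : ℝ)..(g x), Real.exp (-t)) ≤ 1) ∧
    a ≤ 1 := by
  have hF : ∀ t ∈ Ico (0 : ℝ) a, HasDerivWithinAt (fun t => 1 - exp (-g t) - t)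
      (exp (-g t) * (1 + g (g t)) - 1) (Ici 0) t := fun t ht => by
    refine (((hasDerivWithinAt_const t _ 1).sub (hderiv t ht).neg.exp).sub
      (hasDerivWithinAt_id t _)).congr_deriv ?_
    rw [Pi.neg_apply]
    ring
  have hmono : MonotoneOn (fun t => 1 - exp (-g t) - t) (Ico 0 a) :=
    monotoneOn_Ico_of_hasDerivWithinAt_Ici hF fun t ht =>
      sub_nonneg.2 (one_le_exp_neg_mul_of_exp_le (hexp _ (hmaps (Ioo_subset_Ico_self ht))))
  have hbound : ∀ x ∈ Ico (0 : ℝ) a, x ≤ 1 - exp (-g x) := fun x hx => by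
    have := hmono ⟨le_rfl, hx.1.trans_lt hx.2⟩ hx hx.1
    simp only [hg0, neg_zero, exp_zero, sub_self] at this
    linarith
  refine ⟨fun x hx => ?_, le_of_forall_mem_Ico_lt (fun x hx => ?_) zero_le_one⟩
  · rw [integral_exp_neg_eq]
    exact ⟨hbound x hx, by linarith [exp_pos (-g x)]⟩
  · linarith [hbound x hx, exp_pos (-g x)]

/-- Let `g` be differentiable on `[0, a)` with `g 0 = 0`, `g x ≥ x`, `g ([0,a)) ⊆ [0,a)`,
satisfying `g' t = 1 + g (g t)`, and additionally `exp x ≤ 1 + g x` on `[0, a)`.  Then every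
`x ∈ [0, a)` satisfies `x ≤ ∫₀^{g x} exp (-t) dt ≤ 1`; in particular `a ≤ 1`, so no such `g`
exists on `[0, ∞)`. -/
theorem stmt_9 (a : ℝ) (g : ℝ → ℝ)
    (hg0 : g 0 = 0)
    (hge : ∀ x ∈ Set.Ico (0 : ℝ) a, x ≤ g x)
    (hmaps : Set.MapsTo g (Set.Ico (0 : ℝ) a) (Set.Ico (0 : ℝ) a))
    (hderiv : ∀ t ∈ Set.Ico (0 : ℝ) a,
      HasDerivWithinAt g (1 + g (g t)) (Set.Ici 0) t)
    (hexp : ∀ x ∈ Set.Ico (0 : ℝ) a, Real.exp x ≤ 1 + g x) :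
    (∀ x ∈ Set.Ico (0 : ℝ) a,
      x ≤ (∫ t in (0 : ℝ)..(g x), Real.exp (-t)) ∧
      (∫ t in (0 : ℝ)..(g x), Real.exp (-t)) ≤ 1) ∧
    a ≤ 1 :=
  stmt_9_general a g hg0 hmaps hderiv hexp
end

section
/- A real analytic function h : ℝ → ℝ whose Taylor series at some point x₀ has all coefficients nonnegative extends to (equals the restriction of) an entire function; equivalently, its Taylor series at x₀ has infinite radius of convergence. -/
/-!
Pringsheim's theorem: a power series with nonnegative coefficients and finite radius `R` cannot
be analytically continued past the point `x₀ + R`. Indeed, recentring at `x₀ + u` with `u < R`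
gives coefficients `b_k = ∑ₗ C(k+l, l) a_{k+l} uˡ ≥ 0`, and since all terms are nonnegative,
`∑ₖ b_k sᵏ = ∑ₙ aₙ (u + s)ⁿ`; so if the recentred series converged beyond `R - u`, the original
one would converge beyond `R`. As `h` is analytic at `x₀ + R`, the radius must be infinite, and
the Taylor series then converges to `h` on all of `ℝ` and defines the entire extension.
-/

open scoped ENNReal NNReal
open Finset

theorem ENNReal.tsum_mul_add_pow (A : ℕ → ℝ≥0∞) (u s : ℝ≥0∞) :
    ∑' n, A n * (s + u) ^ n =
      ∑' k, (∑' l, ((k + l).choose l : ℝ≥0∞) * A (k + l) * u ^ l) * s ^ k := by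
  calc ∑' n, A n * (s + u) ^ n
      = ∑' n, ∑ kl ∈ antidiagonal n,
          ((kl.1 + kl.2).choose kl.2 : ℝ≥0∞) * A (kl.1 + kl.2) * u ^ kl.2 * s ^ kl.1 := by
        refine tsum_congr fun n => ?_
        rw [(Commute.all s u).add_pow', mul_sum]
        refine sum_congr rfl fun kl hkl => ?_
        rw [← mem_antidiagonal.1 hkl, nsmul_eq_mul, Nat.choose_symm_add]
        ring
    _ = ∑' kl : ℕ × ℕ,
          ((kl.1 + kl.2).choose kl.2 : ℝ≥0∞) * A (kl.1 + kl.2) * u ^ kl.2 * s ^ kl.1 := by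
        rw [← HasAntidiagonal.sigmaAntidiagonalEquivProd.tsum_eq, ENNReal.tsum_sigma']
        refine tsum_congr fun n => ?_
        rw [tsum_fintype, ← sum_coe_sort]
        rfl
    _ = _ := by
        rw [ENNReal.tsum_prod']
        exact tsum_congr fun k => by rw [← ENNReal.tsum_mul_right]

namespace FormalMultilinearSeries

variable {𝕜 E : Type*} [NontriviallyNormedField 𝕜] [NormedAddCommGroup E] [NormedSpace 𝕜 E]

theorem changeOriginSeries_apply_one (p : FormalMultilinearSeries 𝕜 𝕜 E) (k l : ℕ) (x : 𝕜) :
    (p.changeOriginSeries k l fun _ => x) (fun _ => 1) =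
      ((k + l).choose l * x ^ l : 𝕜) • p.coeff (k + l) := by
  have hterm : ∀ s : {s : Finset (Fin (k + l)) // s.card = l},
      (p.changeOriginSeriesTerm k l s.1 s.2 fun _ => x) (fun _ => 1) = x ^ l • p.coeff (k + l) := by
    rintro ⟨s, hs⟩
    rw [changeOriginSeriesTerm_apply, apply_eq_prod_smul_coeff, prod_piecewise]
    simp [hs]
  simp only [changeOriginSeries, _root_.sum_apply, hterm, sum_const, card_univ,
    Fintype.card_finset_len, Fintype.card_fin, ← Nat.cast_smul_eq_nsmul 𝕜, smul_smul]

theorem hasSum_coeff_changeOrigin [CompleteSpace E] (p : FormalMultilinearSeries 𝕜 𝕜 E) {x : 𝕜}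
    (hx : (‖x‖₊ : ℝ≥0∞) < p.radius) (k : ℕ) :
    HasSum (fun l => ((k + l).choose l * x ^ l : 𝕜) • p.coeff (k + l))
      ((p.changeOrigin x).coeff k) := by
  have hx' : ‖x‖ₑ < (p.changeOriginSeries k).radius := by
    simpa only [enorm_eq_nnnorm] using hx.trans_le (p.le_changeOriginSeries_radius k)
  have hsum : Summable fun l => p.changeOriginSeries k l fun _ => x :=
    (p.changeOriginSeries k).summable (mem_eball_zero_iff.2 hx')
  have := ContinuousMultilinearMap.hasSum_eval hsum.hasSum (fun _ => (1 : 𝕜))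
  simp only [changeOriginSeries_apply_one] at this
  exact this

theorem coe_add_le_radius_of_coeff_nonneg (p : FormalMultilinearSeries ℝ ℝ ℝ)
    (hc : ∀ n, 0 ≤ p.coeff n) {u s : ℝ≥0} (hu : (u : ℝ≥0∞) < p.radius)
    (hs : (s : ℝ≥0∞) < (p.changeOrigin u).radius) : ((s + u : ℝ≥0) : ℝ≥0∞) ≤ p.radius := by
  set q := p.changeOrigin u
  have hq : ∀ k, ‖q.coeff k‖ₑ =
      ∑' l, ((k + l).choose l : ℝ≥0∞) * ‖p.coeff (k + l)‖ₑ * (u : ℝ≥0∞) ^ l := by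
    intro k
    have h := p.hasSum_coeff_changeOrigin (x := (u : ℝ)) (by simpa using hu) k
    have hnn : ∀ l, 0 ≤ ((k + l).choose l * (u : ℝ) ^ l) • p.coeff (k + l) := fun l => by
      have := hc (k + l)
      positivity
    have hq0 : 0 ≤ q.coeff k := h.nonneg hnn
    have h' : HasSum (fun l => ‖((k + l).choose l * (u : ℝ) ^ l) • p.coeff (k + l)‖₊)
        ‖q.coeff k‖₊ := by
      refine NNReal.hasSum_coe.1 ?_
      simpa only [coe_nnnorm, Real.norm_of_nonneg (hnn _), Real.norm_of_nonneg hq0] using h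
    rw [enorm_eq_nnnorm, ← (ENNReal.hasSum_coe.2 h').tsum_eq]
    refine tsum_congr fun l => ?_
    simp [enorm_eq_nnnorm, nnnorm_mul, nnnorm_pow, mul_right_comm]
  have hnorm : ∀ (r : FormalMultilinearSeries ℝ ℝ ℝ) n, (‖r n‖₊ : ℝ≥0∞) = ‖r.coeff n‖ₑ :=
    fun r n => by rw [enorm_eq_nnnorm, ENNReal.coe_inj, ← NNReal.coe_inj]; simp
  refine p.le_radius_of_summable_nnnorm ?_
  rw [← ENNReal.tsum_coe_ne_top_iff_summable]
  have key := ENNReal.tsum_mul_add_pow (fun n => ‖p.coeff n‖ₑ) u s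
  simp only [← hq] at key
  have hq_fin := ENNReal.tsum_coe_ne_top_iff_summable.2 (q.summable_nnnorm_mul_pow hs)
  push_cast at hq_fin ⊢
  simp only [hnorm] at hq_fin ⊢
  rwa [key]

end FormalMultilinearSeries

theorem HasFPowerSeriesOnBall.not_analyticAt_add_radius {f : ℝ → ℝ}
    {p : FormalMultilinearSeries ℝ ℝ ℝ} {x : ℝ} (hf : HasFPowerSeriesOnBall f p x p.radius)
    (hc : ∀ n, 0 ≤ p.coeff n) (hR : p.radius ≠ ⊤) : ¬ AnalyticAt ℝ f (x + p.radius.toReal) := by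
  rintro ⟨q, ρ, hq⟩
  set R := p.radius.toNNReal
  have hR' : (R : ℝ≥0∞) = p.radius := ENNReal.coe_toNNReal hR
  obtain ⟨δ, hδ0, hδρ, hδR⟩ : ∃ δ : ℝ≥0, 0 < δ ∧ (δ : ℝ≥0∞) < ρ ∧ δ ≤ R := by
    obtain ⟨δ, h0, hδ⟩ :=
      ENNReal.lt_iff_exists_nnreal_btwn.1 (lt_min hq.r_pos (hR' ▸ hf.r_pos))
    exact ⟨δ, by exact_mod_cast h0, hδ.trans_le (min_le_left _ _),
      by exact_mod_cast (hδ.trans_le (min_le_right _ _)).le⟩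
  have hδ' : (0 : ℝ) < δ := hδ0
  have hδR' : (δ : ℝ) ≤ R := hδR
  -- Recentred at `x + u`, `p` and `q` give the same series, whose radius is `≥ ρ - δ / 4 > R - u`.
  set u : ℝ≥0 := R - δ / 4
  have hu : (u : ℝ) = R - δ / 4 := by
    rw [NNReal.coe_sub (by rw [← NNReal.coe_le_coe]; push_cast; linarith)]
    push_cast; ring
  have huR : (u : ℝ≥0∞) < p.radius := by
    rw [← hR']; exact_mod_cast (show (u : ℝ) < R by linarith)
  have hδρ' : ((δ / 2 + δ / 4 : ℝ≥0) : ℝ≥0∞) < ρ := by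
    refine lt_of_le_of_lt ?_ hδρ
    rw [ENNReal.coe_le_coe, ← NNReal.coe_le_coe]; push_cast; linarith
  have hp_u := hf.changeOrigin (y := (u : ℝ)) (by simpa using huR)
  have hq_u := hq.changeOrigin (y := -((δ / 4 : ℝ≥0) : ℝ))
    (by rw [nnnorm_neg, NNReal.nnnorm_eq]; exact lt_of_le_of_lt (by push_cast; simp) hδρ')
  have hcenter : x + p.radius.toReal + -((δ / 4 : ℝ≥0) : ℝ) = x + u := by
    rw [hu, ← hR', ENNReal.coe_toReal]; push_cast; ring
  rw [hcenter] at hq_u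
  have heq := hp_u.hasFPowerSeriesAt.eq_formalMultilinearSeries hq_u.hasFPowerSeriesAt
  have hs : ((δ / 2 : ℝ≥0) : ℝ≥0∞) < (p.changeOrigin u).radius := by
    rw [heq]
    refine lt_of_lt_of_le ?_ hq_u.r_le
    rw [nnnorm_neg, NNReal.nnnorm_eq, lt_tsub_iff_right]
    exact_mod_cast hδρ'
  have hle := FormalMultilinearSeries.coe_add_le_radius_of_coeff_nonneg p hc huR hs
  rw [← hR', ENNReal.coe_le_coe, ← NNReal.coe_le_coe] at hle
  push_cast at hle
  linarith

theorem hasFPowerSeriesOnBall_taylorSeries {𝕜 : Type*} [RCLike 𝕜] {f : 𝕜 → 𝕜}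
    (hf : ∀ x, AnalyticAt 𝕜 f x) (x₀ : 𝕜) :
    HasFPowerSeriesOnBall f
      (FormalMultilinearSeries.ofScalars 𝕜 fun n => iteratedDeriv n f x₀ / (Nat.factorial n : 𝕜))
      x₀
      (FormalMultilinearSeries.ofScalars 𝕜 fun n =>
        iteratedDeriv n f x₀ / (Nat.factorial n : 𝕜)).radius :=
  AnalyticOn.hasFPowerSeriesOnBall (hf x₀).hasFPowerSeriesAt.radius_pos
    fun x _ => (hf x).analyticWithinAt

theorem radius_taylorSeries_eq_top_of_nonneg {f : ℝ → ℝ} (hf : ∀ x, AnalyticAt ℝ f x) {x₀ : ℝ}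
    (hc : ∀ n, 0 ≤ iteratedDeriv n f x₀ / (Nat.factorial n : ℝ)) :
    (FormalMultilinearSeries.ofScalars ℝ fun n =>
      iteratedDeriv n f x₀ / (Nat.factorial n : ℝ)).radius = ⊤ := by
  by_contra hR
  exact (hasFPowerSeriesOnBall_taylorSeries hf x₀).not_analyticAt_add_radius
    (by simpa using hc) hR (hf _)

theorem exists_differentiable_eq_of_hasSum {f : ℝ → ℝ} {c : ℕ → ℝ} {x₀ : ℝ}
    (hf : ∀ x, HasSum (fun n => c n * (x - x₀) ^ n) (f x)) :
    ∃ F : ℂ → ℂ, Differentiable ℂ F ∧ ∀ x : ℝ, F x = f x := by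
  set P := FormalMultilinearSeries.ofScalars ℂ fun n => (c n : ℂ)
  have hP : P.radius = ⊤ := by
    refine ENNReal.eq_top_of_forall_nnreal_le fun r => P.le_radius_of_tendsto (l := 0) ?_
    have := (hf (x₀ + r)).summable.tendsto_atTop_zero.norm
    simpa [P] using this
  refine ⟨fun z => P.sum (z - x₀), fun z => ?_, fun x => ?_⟩
  · exact ((P.analyticOnNhd _ (by simp [hP])).differentiableAt).comp z
      (differentiableAt_id.sub_const _)
  · have := (hf x).mapL Complex.ofRealCLM
    simp only [Complex.ofRealCLM_apply] at this
    push_cast at this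
    simpa [P, FormalMultilinearSeries.sum, FormalMultilinearSeries.ofScalars_apply_eq, mul_comm]
      using this.tsum_eq

/-- A function `h : ℝ → ℝ`, real analytic everywhere, whose Taylor coefficients at some point
`x₀` are all nonnegative, is the restriction of an entire function; equivalently its Taylor
series at `x₀` converges to `h` on all of `ℝ`. -/
theorem stmt_11 (h : ℝ → ℝ) (han : ∀ x : ℝ, AnalyticAt ℝ h x) (x₀ : ℝ)
    (hpos : ∀ n : ℕ, 0 ≤ iteratedDeriv n h x₀ / (Nat.factorial n : ℝ)) :
    (∃ F : ℂ → ℂ, Differentiable ℂ F ∧ ∀ x : ℝ, F x = h x) ∧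
    ∀ x : ℝ, HasSum (fun n : ℕ => iteratedDeriv n h x₀ / (Nat.factorial n : ℝ) * (x - x₀) ^ n)
      (h x) := by
  have hball := hasFPowerSeriesOnBall_taylorSeries han x₀
  rw [radius_taylorSeries_eq_top_of_nonneg han hpos] at hball
  have hsum : ∀ x : ℝ, HasSum
      (fun n : ℕ => iteratedDeriv n h x₀ / (Nat.factorial n : ℝ) * (x - x₀) ^ n) (h x) := by
    intro x
    simpa [FormalMultilinearSeries.ofScalars_apply_eq, mul_comm] using
      hball.hasSum (y := x - x₀) (by simp)
  exact ⟨exists_differentiable_eq_of_hasSum hsum, hsum⟩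
end

section
/- Let f, g : [0,∞) → [0,∞) be increasing with f(0) = g(0) = 0 and f(x) ≥ x, g(x) ≥ x for all x ≥ 0, and let F, G be their images under the Picard map F(x) = ∫₀ˣ exp(f⁻¹(t)) dt, G(x) = ∫₀ˣ exp(g⁻¹(t)) dt. Then for every T > 0, ∫₀ᵀ |F(t) - G(t)| dt ≤ ∫₀ᵀ eᵗ ∫₀ᵗ |f(s) - g(s)| ds dt. -/
open MeasureTheory Set intervalIntegral

private lemma abs_exp_sub_exp_le {a b c : ℝ} (ha : a ≤ c) (hb : b ≤ c) :
    |Real.exp a - Real.exp b| ≤ Real.exp c * |a - b| := by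
  wlog h : b ≤ a generalizing a b
  · rw [abs_sub_comm, abs_sub_comm a b]; exact this hb ha (le_of_not_ge h)
  rw [abs_of_nonneg (sub_nonneg.2 (Real.exp_le_exp.2 h)), abs_of_nonneg (sub_nonneg.2 h)]
  have h1 : Real.exp a - Real.exp b ≤ Real.exp a * (a - b) := by
    have := Real.add_one_le_exp (b - a)
    have h2 : Real.exp b = Real.exp a * Real.exp (b - a) := by
      rw [← Real.exp_add]; ring_nf
    nlinarith [Real.exp_pos a, Real.exp_pos (b - a)]
  have h3 : Real.exp a * (a - b) ≤ Real.exp c * (a - b) :=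
    mul_le_mul_of_nonneg_right (Real.exp_le_exp.2 ha) (sub_nonneg.2 h)
  linarith

lemma key_area (φ ψ : ℝ → ℝ) (hφ : Monotone φ) (hψ : Monotone ψ)
    (hgal : ∀ x y : ℝ, 0 ≤ x → 0 ≤ y → (x < ψ y ↔ φ x < y))
    (hge : ∀ x, 0 ≤ x → x ≤ φ x) (hψpos : ∀ y, 0 ≤ y → 0 ≤ ψ y)
    (t : ℝ) (ht : 0 ≤ t) :
    ∫ y in (0:ℝ)..t, ψ y = ∫ x in (0:ℝ)..t, (max (φ x) t - φ x) := by
  have mψ : Measurable ψ := hψ.measurable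
  have mφ : Measurable φ := hφ.measurable
  have mφ' : Measurable (fun x => max (φ x) t) := mφ.max measurable_const
  have hreg : regionBetween (fun _ => (0:ℝ)) ψ (Ioo 0 t)
      = Prod.swap ⁻¹' (regionBetween φ (fun x => max (φ x) t) (Ioo 0 t)) := by
    ext ⟨y, x⟩
    simp only [regionBetween, mem_setOf_eq, mem_Ioo, mem_preimage, Prod.swap, Prod.fst, Prod.snd]
    constructor
    · rintro ⟨⟨hy0, hyt⟩, hx0, hxψ⟩
      have hφx : φ x < y := (hgal x y hx0.le hy0.le).1 hxψ
      refine ⟨⟨hx0, lt_of_le_of_lt (hge x hx0.le) (hφx.trans hyt)⟩, hφx, lt_of_lt_of_le hyt (le_max_right _ _)⟩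
    · rintro ⟨⟨hx0, hxt⟩, hφxy, hymax⟩
      have hy0 : 0 < y := lt_of_le_of_lt (le_trans hx0.le (hge x hx0.le)) hφxy
      have hyt : y < t := by
        rcases max_cases (φ x) t with ⟨hm, hle⟩ | ⟨hm, hle⟩
        · exact absurd (hφxy.trans (hm ▸ hymax)) (lt_irrefl _)
        · exact hm ▸ hymax
      exact ⟨⟨hy0, hyt⟩, hx0, (hgal x y hx0.le hy0.le).2 hφxy⟩
  have hv : (volume.prod volume) (regionBetween (fun _ => (0:ℝ)) ψ (Ioo 0 t))
      = (volume.prod volume) (regionBetween φ (fun x => max (φ x) t) (Ioo 0 t)) := by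
    rw [hreg]
    exact MeasureTheory.Measure.measurePreserving_swap.measure_preimage
      ((measurableSet_regionBetween mφ mφ' measurableSet_Ioo).nullMeasurableSet)
  rw [volume_regionBetween_eq_lintegral' measurable_const mψ measurableSet_Ioo,
    volume_regionBetween_eq_lintegral' mφ mφ' measurableSet_Ioo] at hv
  rw [integral_of_le ht, integral_of_le ht, integral_Ioc_eq_integral_Ioo,
    integral_Ioc_eq_integral_Ioo]
  rw [MeasureTheory.integral_eq_lintegral_of_nonneg_ae
      ((ae_restrict_iff' measurableSet_Ioo).2 (ae_of_all _ fun y hy => hψpos y hy.1.le))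
      mψ.aestronglyMeasurable.restrict,
    MeasureTheory.integral_eq_lintegral_of_nonneg_ae
      ((ae_restrict_iff' measurableSet_Ioo).2 (ae_of_all _ fun x _ =>
        sub_nonneg.2 (le_max_left _ _)))
      ((mφ'.sub mφ).aestronglyMeasurable.restrict)]
  congr 1
  simpa using hv

private lemma inv_compare (f g finv ginv : ℝ → ℝ) (hf : Monotone f) (hg : Monotone g)
    (hfi : Monotone finv) (hgi : Monotone ginv)
    (hgalf : ∀ x y : ℝ, 0 ≤ x → 0 ≤ y → (x < finv y ↔ f x < y))
    (hgalg : ∀ x y : ℝ, 0 ≤ x → 0 ≤ y → (x < ginv y ↔ g x < y))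
    (hfge : ∀ x, 0 ≤ x → x ≤ f x) (hgge : ∀ x, 0 ≤ x → x ≤ g x)
    (hfip : ∀ y, 0 ≤ y → 0 ≤ finv y) (hgip : ∀ y, 0 ≤ y → 0 ≤ ginv y)
    (t : ℝ) (ht : 0 ≤ t) :
    ∫ y in (0:ℝ)..t, |finv y - ginv y| ≤ ∫ x in (0:ℝ)..t, |f x - g x| := by
  set M : ℝ → ℝ := fun x => max (f x) (g x) with hM
  set Minv : ℝ → ℝ := fun y => min (finv y) (ginv y) with hMinv
  have hMm : Monotone M := hf.max hg
  have hMim : Monotone Minv := hfi.min hgi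
  have hgalM : ∀ x y : ℝ, 0 ≤ x → 0 ≤ y → (x < Minv y ↔ M x < y) := fun x y hx hy => by
    simp only [hM, hMinv, lt_min_iff, max_lt_iff, hgalf x y hx hy, hgalg x y hx hy]
  have hMge : ∀ x, 0 ≤ x → x ≤ M x := fun x hx => le_trans (hfge x hx) (le_max_left _ _)
  have hMip : ∀ y, 0 ≤ y → 0 ≤ Minv y := fun y hy => le_min (hfip y hy) (hgip y hy)
  have A := key_area f finv hf hfi hgalf hfge hfip t ht
  have B := key_area g ginv hg hgi hgalg hgge hgip t ht
  have C := key_area M Minv hMm hMim hgalM hMge hMip t ht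
  -- integrabilities
  have int_of_mono : ∀ h : ℝ → ℝ, Monotone h → IntervalIntegrable h volume 0 t :=
    fun h hh => (hh.monotoneOn _).intervalIntegrable
  have if1 := int_of_mono f hf
  have ig1 := int_of_mono g hg
  have iM1 := int_of_mono M hMm
  have ifi := int_of_mono finv hfi
  have igi := int_of_mono ginv hgi
  have iMi := int_of_mono Minv hMim
  have key1 : ∫ y in (0:ℝ)..t, |finv y - ginv y|
      = (∫ y in (0:ℝ)..t, finv y) + (∫ y in (0:ℝ)..t, ginv y)
        - 2 * ∫ y in (0:ℝ)..t, Minv y := by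
    rw [← intervalIntegral.integral_const_mul, ← intervalIntegral.integral_add ifi igi,
      ← intervalIntegral.integral_sub (ifi.add igi) (iMi.const_mul 2)]
    apply intervalIntegral.integral_congr
    intro y _
    have hMy : Minv y = min (finv y) (ginv y) := rfl
    simp only [Pi.sub_apply, Pi.add_apply]
    rcases le_total (finv y) (ginv y) with h | h
    · rw [abs_of_nonpos (sub_nonpos.2 h), hMy, min_eq_left h]; ring
    · rw [abs_of_nonneg (sub_nonneg.2 h), hMy, min_eq_right h]; ring
  rw [key1, A, B, C]
  have imax : ∀ h : ℝ → ℝ, Monotone h →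
      IntervalIntegrable (fun x => max (h x) t - h x) volume 0 t := fun h hh =>
    ((int_of_mono _ (hh.max monotone_const))).sub (int_of_mono h hh)
  rw [← intervalIntegral.integral_const_mul, ← intervalIntegral.integral_add (imax f hf) (imax g hg),
    ← intervalIntegral.integral_sub ((imax f hf).add (imax g hg)) ((imax M hMm).const_mul 2)]
  apply intervalIntegral.integral_mono_on ht _ ((if1.sub ig1).abs)
  · intro x _
    have h1 : max (f x) t ≤ max (M x) t := max_le_max (le_max_left _ _) le_rfl
    have h2 : max (g x) t ≤ max (M x) t := max_le_max (le_max_right _ _) le_rfl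
    have h3 : 2 * M x - f x - g x = |f x - g x| := by
      have hMx : M x = max (f x) (g x) := rfl
      rcases le_total (f x) (g x) with h | h
      · rw [abs_of_nonpos (sub_nonpos.2 h), hMx, max_eq_right h]; ring
      · rw [abs_of_nonneg (sub_nonneg.2 h), hMx, max_eq_left h]; ring
    linarith
  · exact ((imax f hf).add (imax g hg)).sub ((imax M hMm).const_mul 2)

/-- If `f, g : [0,∞) → [0,∞)` are continuous strictly increasing bijections with
`f 0 = g 0 = 0` and `f x ≥ x`, `g x ≥ x`, and `F, G` are their images under the Picard map
`F x = ∫₀ˣ exp (f⁻¹ t) dt`, `G x = ∫₀ˣ exp (g⁻¹ t) dt`, then for every `T > 0`,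
`∫₀ᵀ |F t - G t| dt ≤ ∫₀ᵀ eᵗ (∫₀ᵗ |f s - g s| ds) dt`. -/
theorem stmt_15 (f g finv ginv F G : ℝ → ℝ)
    (hf_cont : ContinuousOn f (Set.Ici 0)) (hg_cont : ContinuousOn g (Set.Ici 0))
    (hf_mono : StrictMonoOn f (Set.Ici 0)) (hg_mono : StrictMonoOn g (Set.Ici 0))
    (hf_bij : Set.BijOn f (Set.Ici 0) (Set.Ici 0))
    (hg_bij : Set.BijOn g (Set.Ici 0) (Set.Ici 0))
    (hf0 : f 0 = 0) (hg0 : g 0 = 0)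
    (hf_ge : ∀ x : ℝ, 0 ≤ x → x ≤ f x) (hg_ge : ∀ x : ℝ, 0 ≤ x → x ≤ g x)
    (hfinv_pos : ∀ x : ℝ, 0 ≤ x → 0 ≤ finv x) (hginv_pos : ∀ x : ℝ, 0 ≤ x → 0 ≤ ginv x)
    (hfinv : ∀ x : ℝ, 0 ≤ x → finv (f x) = x ∧ f (finv x) = x)
    (hginv : ∀ x : ℝ, 0 ≤ x → ginv (g x) = x ∧ g (ginv x) = x)
    (hF : ∀ x : ℝ, 0 ≤ x → F x = ∫ t in (0 : ℝ)..x, Real.exp (finv t))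
    (hG : ∀ x : ℝ, 0 ≤ x → G x = ∫ t in (0 : ℝ)..x, Real.exp (ginv t)) :
    ∀ T : ℝ, 0 < T →
      (∫ t in (0 : ℝ)..T, |F t - G t|) ≤
        ∫ t in (0 : ℝ)..T, Real.exp t * ∫ s in (0 : ℝ)..t, |f s - g s| := by
  intro T hT
  -- monotonicity of the inverses on [0,∞)
  have hfi_mono : MonotoneOn finv (Set.Ici 0) := by
    intro y1 h1 y2 h2 hle
    by_contra hlt
    push_neg at hlt
    have := hf_mono (Set.mem_Ici.2 (hfinv_pos y2 h2)) (Set.mem_Ici.2 (hfinv_pos y1 h1)) hlt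
    rw [(hfinv y1 h1).2, (hfinv y2 h2).2] at this
    exact absurd hle (not_le.2 this)
  have hgi_mono : MonotoneOn ginv (Set.Ici 0) := by
    intro y1 h1 y2 h2 hle
    by_contra hlt
    push_neg at hlt
    have := hg_mono (Set.mem_Ici.2 (hginv_pos y2 h2)) (Set.mem_Ici.2 (hginv_pos y1 h1)) hlt
    rw [(hginv y1 h1).2, (hginv y2 h2).2] at this
    exact absurd hle (not_le.2 this)
  -- extended (globally monotone) versions
  set f' : ℝ → ℝ := fun x => f (max x 0) with hf'
  set g' : ℝ → ℝ := fun x => g (max x 0) with hg'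
  set fi' : ℝ → ℝ := fun x => finv (max x 0) with hfi'
  set gi' : ℝ → ℝ := fun x => ginv (max x 0) with hgi'
  have hmem : ∀ x : ℝ, max x 0 ∈ Set.Ici (0:ℝ) := fun x => le_max_right x 0
  have hf'm : Monotone f' := fun a b hab =>
    (hf_mono.monotoneOn) (hmem a) (hmem b) (max_le_max hab le_rfl)
  have hg'm : Monotone g' := fun a b hab =>
    (hg_mono.monotoneOn) (hmem a) (hmem b) (max_le_max hab le_rfl)
  have hfi'm : Monotone fi' := fun a b hab =>
    hfi_mono (hmem a) (hmem b) (max_le_max hab le_rfl)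
  have hgi'm : Monotone gi' := fun a b hab =>
    hgi_mono (hmem a) (hmem b) (max_le_max hab le_rfl)
  have heqf : ∀ x : ℝ, 0 ≤ x → f' x = f x := fun x hx => by rw [hf']; simp [max_eq_left hx]
  have heqg : ∀ x : ℝ, 0 ≤ x → g' x = g x := fun x hx => by rw [hg']; simp [max_eq_left hx]
  have heqfi : ∀ x : ℝ, 0 ≤ x → fi' x = finv x := fun x hx => by rw [hfi']; simp [max_eq_left hx]
  have heqgi : ∀ x : ℝ, 0 ≤ x → gi' x = ginv x := fun x hx => by rw [hgi']; simp [max_eq_left hx]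
  -- Galois connections
  have hgalf : ∀ x y : ℝ, 0 ≤ x → 0 ≤ y → (x < fi' y ↔ f' x < y) := by
    intro x y hx hy
    rw [heqfi y hy, heqf x hx]
    constructor
    · intro h
      have := hf_mono (Set.mem_Ici.2 hx) (Set.mem_Ici.2 (hfinv_pos y hy)) h
      rwa [(hfinv y hy).2] at this
    · intro h
      by_contra hc
      push_neg at hc
      have := hf_mono.monotoneOn (Set.mem_Ici.2 (hfinv_pos y hy)) (Set.mem_Ici.2 hx) hc
      rw [(hfinv y hy).2] at this
      exact absurd h (not_lt.2 this)
  have hgalg : ∀ x y : ℝ, 0 ≤ x → 0 ≤ y → (x < gi' y ↔ g' x < y) := by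
    intro x y hx hy
    rw [heqgi y hy, heqg x hx]
    constructor
    · intro h
      have := hg_mono (Set.mem_Ici.2 hx) (Set.mem_Ici.2 (hginv_pos y hy)) h
      rwa [(hginv y hy).2] at this
    · intro h
      by_contra hc
      push_neg at hc
      have := hg_mono.monotoneOn (Set.mem_Ici.2 (hginv_pos y hy)) (Set.mem_Ici.2 hx) hc
      rw [(hginv y hy).2] at this
      exact absurd h (not_lt.2 this)
  have hf'ge : ∀ x, 0 ≤ x → x ≤ f' x := fun x hx => (heqf x hx).symm ▸ hf_ge x hx
  have hg'ge : ∀ x, 0 ≤ x → x ≤ g' x := fun x hx => (heqg x hx).symm ▸ hg_ge x hx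
  have hfi'p : ∀ y, 0 ≤ y → 0 ≤ fi' y := fun y hy => (heqfi y hy).symm ▸ hfinv_pos y hy
  have hgi'p : ∀ y, 0 ≤ y → 0 ≤ gi' y := fun y hy => (heqgi y hy).symm ▸ hginv_pos y hy
  -- finv s ≤ s for s ≥ 0
  have hfi_le : ∀ s : ℝ, 0 ≤ s → finv s ≤ s := fun s hs => by
    have := hf_ge (finv s) (hfinv_pos s hs)
    rwa [(hfinv s hs).2] at this
  have hgi_le : ∀ s : ℝ, 0 ≤ s → ginv s ≤ s := fun s hs => by
    have := hg_ge (ginv s) (hginv_pos s hs)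
    rwa [(hginv s hs).2] at this
  -- pointwise bound : for 0 ≤ t, |F t - G t| ≤ exp t * ∫₀ᵗ |f - g|
  have main : ∀ t : ℝ, 0 ≤ t →
      |F t - G t| ≤ Real.exp t * ∫ s in (0:ℝ)..t, |f s - g s| := by
    intro t ht
    have uIcc0t : Set.uIcc (0:ℝ) t = Set.Icc 0 t := Set.uIcc_of_le ht
    have iEf : IntervalIntegrable (fun s => Real.exp (finv s)) volume 0 t := by
      apply MonotoneOn.intervalIntegrable
      rw [uIcc0t]
      intro a ha b hb hab
      exact Real.exp_le_exp.2 (hfi_mono ha.1 hb.1 hab)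
    have iEg : IntervalIntegrable (fun s => Real.exp (ginv s)) volume 0 t := by
      apply MonotoneOn.intervalIntegrable
      rw [uIcc0t]
      intro a ha b hb hab
      exact Real.exp_le_exp.2 (hgi_mono ha.1 hb.1 hab)
    have ifi : IntervalIntegrable finv volume 0 t := by
      apply MonotoneOn.intervalIntegrable; rw [uIcc0t]
      exact fun a ha b hb hab => hfi_mono ha.1 hb.1 hab
    have igi : IntervalIntegrable ginv volume 0 t := by
      apply MonotoneOn.intervalIntegrable; rw [uIcc0t]
      exact fun a ha b hb hab => hgi_mono ha.1 hb.1 hab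
    rw [hF t ht, hG t ht, ← intervalIntegral.integral_sub iEf iEg]
    calc |∫ s in (0:ℝ)..t, (Real.exp (finv s) - Real.exp (ginv s))|
        ≤ ∫ s in (0:ℝ)..t, |Real.exp (finv s) - Real.exp (ginv s)| :=
          intervalIntegral.abs_integral_le_integral_abs ht
      _ ≤ ∫ s in (0:ℝ)..t, Real.exp t * |finv s - ginv s| := by
          apply intervalIntegral.integral_mono_on ht ((iEf.sub iEg).abs)
            ((ifi.sub igi).abs.const_mul _)
          intro s hs
          exact abs_exp_sub_exp_le ((hfi_le s hs.1).trans hs.2) ((hgi_le s hs.1).trans hs.2)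
      _ = Real.exp t * ∫ s in (0:ℝ)..t, |finv s - ginv s| :=
          intervalIntegral.integral_const_mul _ _
      _ ≤ Real.exp t * ∫ s in (0:ℝ)..t, |f s - g s| := by
          apply mul_le_mul_of_nonneg_left _ (Real.exp_pos t).le
          have e1 : (∫ s in (0:ℝ)..t, |finv s - ginv s|) = ∫ s in (0:ℝ)..t, |fi' s - gi' s| := by
            apply intervalIntegral.integral_congr
            intro s hs
            rw [uIcc0t] at hs
            show |finv s - ginv s| = |fi' s - gi' s|
            rw [heqfi s hs.1, heqgi s hs.1]
          have e2 : (∫ s in (0:ℝ)..t, |f s - g s|) = ∫ s in (0:ℝ)..t, |f' s - g' s| := by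
            apply intervalIntegral.integral_congr
            intro s hs
            rw [uIcc0t] at hs
            show |f s - g s| = |f' s - g' s|
            rw [heqf s hs.1, heqg s hs.1]
          rw [e1, e2]
          exact inv_compare f' g' fi' gi' hf'm hg'm hfi'm hgi'm hgalf hgalg
            hf'ge hg'ge hfi'p hgi'p t ht
  -- continuity of the right-hand side
  have hf'c : Continuous f' := hf_cont.comp_continuous (continuous_id.max continuous_const) hmem
  have hg'c : Continuous g' := hg_cont.comp_continuous (continuous_id.max continuous_const) hmem
  have habs : Continuous fun x => |f' x - g' x| := (hf'c.sub hg'c).abs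
  have hprim : Continuous fun t => ∫ s in (0:ℝ)..t, |f' s - g' s| :=
    intervalIntegral.continuous_primitive
      (fun a b => (habs.continuousOn).intervalIntegrable) 0
  have hRHScont : ContinuousOn (fun t => Real.exp t * ∫ s in (0:ℝ)..t, |f s - g s|)
      (Set.Icc 0 T) := by
    apply ContinuousOn.mul (Real.continuous_exp.continuousOn)
    apply ContinuousOn.congr (hprim.continuousOn)
    intro t ht
    apply intervalIntegral.integral_congr
    intro s hs
    rw [Set.uIcc_of_le ht.1] at hs
    show |f s - g s| = |f' s - g' s|
    rw [heqf s hs.1, heqg s hs.1]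
  have hRHSint : IntervalIntegrable (fun t => Real.exp t * ∫ s in (0:ℝ)..t, |f s - g s|)
      volume 0 T := by
    apply ContinuousOn.intervalIntegrable
    rwa [Set.uIcc_of_le hT.le]
  by_cases hLHS : IntervalIntegrable (fun t => |F t - G t|) volume 0 T
  · exact intervalIntegral.integral_mono_on hT.le hLHS hRHSint fun t ht => main t ht.1
  · rw [intervalIntegral.integral_undef]
    · apply intervalIntegral.integral_nonneg hT.le
      intro u hu
      apply mul_nonneg (Real.exp_pos u).le
      apply intervalIntegral.integral_nonneg hu.1
      intro s _
      exact abs_nonneg _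
    · exact hLHS
end
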